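/- arXiv:2406.18612 — 4 statements merged into one kernel-verified Lean document; each statement's English description precedes it below -/
import Mathlib

section
/- Let V be a finite set, let F be an edge set on V forming a forest, and let f be a function from subsets of V to {0,1} satisfying f(V)=0, symmetry (f(S)=f(V\S) for all S⊆V), and disjunctivity (if A,B⊆V are disjoint and f(A)=f(B)=0 then f(A∪B)=0). Suppose f(C)=0 for every connected component C of (V,F). Define the pruned edge set F' = {e∈F : some connected component N of the graph (V, F\{e}) satisfies f(N)=1}. Then every connected component N of the graph (V,F') satisfies f(N)=0. -/
/-!
Delete the edges of `F \ F'` one at a time; every intermediate forest `G` keeps the property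
that all its components have `f = 0`. Let `uv ∈ G` be such an edge. A component of `G - uv`
avoiding `u` and `v` is a component of `G`. The component `C` of `u` lies in the component `L`
of `u` in `F - uv`, which has `f L = 0` because `uv ∉ F'`; since `uv` is a bridge of `F`, the
rest of `L` is a union of components of `G - uv` avoiding `u` and `v`, hence has `f = 0` by
disjunctivity, and symmetry lets us subtract it from `L` to get `f C = 0`.
-/

open SimpleGraph Function

section

variable {V : Type*} {f : Set V → ℕ}

theorem f_eq_zero_of_union_eq_zero (hsymm : ∀ S : Set V, f S = f Sᶜ)
    (hdisj : ∀ A B : Set V, Disjoint A B → f A = 0 → f B = 0 → f (A ∪ B) = 0)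
    {A B : Set V} (hAB : Disjoint A B) (hAB0 : f (A ∪ B) = 0) (hB : f B = 0) : f A = 0 := by
  have hcompl : Aᶜ = (A ∪ B)ᶜ ∪ B := by
    ext x
    have : x ∈ A → x ∉ B := fun h => Set.disjoint_left.mp hAB h
    simp only [Set.mem_compl_iff, Set.mem_union]
    tauto
  rw [hsymm, hcompl]
  exact hdisj _ _ (disjoint_compl_left.mono_right Set.subset_union_right)
    (by rwa [← hsymm]) hB

theorem f_biUnion_eq_zero (hempty : f ∅ = 0)
    (hdisj : ∀ A B : Set V, Disjoint A B → f A = 0 → f B = 0 → f (A ∪ B) = 0)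
    {ι : Type*} {A : ι → Set V} (hA : Pairwise (Disjoint on A)) {s : Set ι} (hs : s.Finite)
    (h0 : ∀ i ∈ s, f (A i) = 0) : f (⋃ i ∈ s, A i) = 0 := by
  induction s, hs using Set.Finite.induction_on with
  | empty => simpa using hempty
  | @insert i s hi _ ih =>
    rw [Set.biUnion_insert]
    refine hdisj _ _ ?_ (h0 i (Set.mem_insert i s))
      (ih fun j hj => h0 j (Set.mem_insert_of_mem i hj))
    exact Set.disjoint_iUnion₂_right.mpr fun j hj => hA (ne_of_mem_of_not_mem hj hi).symm

theorem f_eq_zero_of_connectedComponentMk_subset [Finite V] (hempty : f ∅ = 0)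
    (hdisj : ∀ A B : Set V, Disjoint A B → f A = 0 → f B = 0 → f (A ∪ B) = 0)
    {G : SimpleGraph V} {S : Set V} (hS : ∀ x ∈ S, (G.connectedComponentMk x).supp ⊆ S)
    (h0 : ∀ x ∈ S, f (G.connectedComponentMk x).supp = 0) : f S = 0 := by
  have hS_eq : S = ⋃ C ∈ G.connectedComponentMk '' S, C.supp := by
    rw [Set.biUnion_image]
    exact subset_antisymm
      (fun x hx => Set.mem_iUnion₂.mpr ⟨x, hx, ConnectedComponent.connectedComponentMk_mem⟩)
      (Set.iUnion₂_subset hS)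
  rw [hS_eq]
  exact f_biUnion_eq_zero hempty hdisj G.pairwise_disjoint_supp_connectedComponent
    (Set.toFinite S |>.image _) (Set.forall_mem_image.mpr h0)

theorem supp_connectedComponentMk_deleteEdges {G : SimpleGraph V} {u v x : V}
    (hu : u ∉ ((G.deleteEdges {s(u, v)}).connectedComponentMk x).supp)
    (hv : v ∉ ((G.deleteEdges {s(u, v)}).connectedComponentMk x).supp) :
    ((G.deleteEdges {s(u, v)}).connectedComponentMk x).supp = (G.connectedComponentMk x).supp := by
  set C := (G.deleteEdges {s(u, v)}).connectedComponentMk x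
  refine subset_antisymm
    (ConnectedComponent.connectedComponentMk_supp_subset_supp (deleteEdges_le _) _
      ConnectedComponent.connectedComponentMk_mem) fun y hy => ?_
  have hwalk : ∀ {a b}, G.Walk a b → a ∈ C.supp → b ∈ C.supp := by
    intro a b q
    induction q with
    | nil => exact id
    | @cons a b _ hab _ ih =>
      refine fun ha => ih (C.mem_supp_of_adj_mem_supp ha (deleteEdges_adj.mpr ⟨hab, ?_⟩))
      intro h
      rcases Sym2.eq_iff.mp h with ⟨rfl, -⟩ | ⟨rfl, -⟩
      exacts [hu ha, hv ha]
  obtain ⟨p⟩ := (ConnectedComponent.exact hy).symm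
  exact hwalk p ConnectedComponent.connectedComponentMk_mem

theorem f_supp_eq_zero_of_mem_of_not_reachable [Finite V] (hempty : f ∅ = 0)
    (hsymm : ∀ S : Set V, f S = f Sᶜ)
    (hdisj : ∀ A B : Set V, Disjoint A B → f A = 0 → f B = 0 → f (A ∪ B) = 0)
    {G H : SimpleGraph V} (hGH : G ≤ H) (hH : ∀ L : H.ConnectedComponent, f L.supp = 0)
    {u v : V} (huv : ¬ H.Reachable u v)
    (hfar : ∀ D : G.ConnectedComponent, u ∉ D.supp → v ∉ D.supp → f D.supp = 0)
    {C : G.ConnectedComponent} (hu : u ∈ C.supp) : f C.supp = 0 := by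
  set L := H.connectedComponentMk u
  have hCL : C.supp ⊆ L.supp := by
    rw [← (C.mem_supp_iff u).mp hu]
    exact ConnectedComponent.connectedComponentMk_supp_subset_supp hGH L
      ConnectedComponent.connectedComponentMk_mem
  have hrest : f (L.supp \ C.supp) = 0 := by
    refine f_eq_zero_of_connectedComponentMk_subset hempty hdisj (G := G) (fun x hx => ?_)
      fun x hx => hfar _ (fun hux => hx.2 ?_) fun hvx => huv ?_
    · have hxC : G.connectedComponentMk x ≠ C :=
        fun h => hx.2 (h ▸ ConnectedComponent.connectedComponentMk_mem)
      exact Set.subset_sdiff.mpr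
        ⟨ConnectedComponent.connectedComponentMk_supp_subset_supp hGH L hx.1,
          G.pairwise_disjoint_supp_connectedComponent hxC⟩
    · rw [← ConnectedComponent.eq_of_common_vertex hux hu]
      exact ConnectedComponent.connectedComponentMk_mem
    · exact L.reachable_of_mem_supp ConnectedComponent.connectedComponentMk_mem
        (ConnectedComponent.connectedComponentMk_supp_subset_supp hGH L hx.1 hvx)
  refine f_eq_zero_of_union_eq_zero hsymm hdisj Set.disjoint_sdiff_right ?_ hrest
  rw [Set.union_sdiff_cancel hCL]
  exact hH L

theorem forall_supp_deleteEdges_eq_zero [Finite V] (hempty : f ∅ = 0)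
    (hsymm : ∀ S : Set V, f S = f Sᶜ)
    (hdisj : ∀ A B : Set V, Disjoint A B → f A = 0 → f B = 0 → f (A ∪ B) = 0)
    {G H : SimpleGraph V} (hGH : G ≤ H) (hacyc : H.IsAcyclic)
    (hG : ∀ C : G.ConnectedComponent, f C.supp = 0) {e : Sym2 V}
    (hHe : ∀ C : (H.deleteEdges {e}).ConnectedComponent, f C.supp = 0) :
    ∀ C : (G.deleteEdges {e}).ConnectedComponent, f C.supp = 0 := by
  induction e with | h u v =>
  by_cases hadj : G.Adj u v
  swap
  · rwa [deleteEdges_eq_self.mpr (Set.disjoint_singleton_right.mpr hadj)]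
  have hbridge : ¬ (H.deleteEdges {s(u, v)}).Reachable u v :=
    isAcyclic_iff_forall_adj_isBridge.mp hacyc (hGH hadj)
  have hfar : ∀ D : (G.deleteEdges {s(u, v)}).ConnectedComponent,
      u ∉ D.supp → v ∉ D.supp → f D.supp = 0 := by
    intro D
    induction D using ConnectedComponent.ind with | h x =>
    intro hu hv
    rw [supp_connectedComponentMk_deleteEdges hu hv]
    exact hG _
  have hle := deleteEdges_mono (s := {s(u, v)}) hGH
  intro C
  by_cases hu : u ∈ C.supp
  · exact f_supp_eq_zero_of_mem_of_not_reachable hempty hsymm hdisj hle hHe hbridge hfar hu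
  by_cases hv : v ∈ C.supp
  · exact f_supp_eq_zero_of_mem_of_not_reachable hempty hsymm hdisj hle hHe
      (fun h => hbridge h.symm) (fun D hv hu => hfar D hu hv) hv
  exact hfar C hu hv

end

/-- Lemma 2 of the paper: let `F` be a forest edge set on a finite vertex set `V`
and `f` a correct constraint function (values in `{0,1}`, `f V = 0`, symmetry,
disjunctivity) with `f C = 0` for every connected component `C` of `(V, F)`.
Define the pruned edge set
`F' = {e ∈ F | some connected component N of (V, F \ {e}) satisfies f N = 1}`.
Then every connected component `N` of `(V, F')` satisfies `f N = 0`. -/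
theorem stmt_4 {V : Type*} [Fintype V] (F : Set (Sym2 V)) (f : Set V → ℕ)
    (hforest : (SimpleGraph.fromEdgeSet F).IsAcyclic)
    (hrange : ∀ S : Set V, f S = 0 ∨ f S = 1)
    (hV : f Set.univ = 0)
    (hsymm : ∀ S : Set V, f S = f Sᶜ)
    (hdisj : ∀ A B : Set V, Disjoint A B → f A = 0 → f B = 0 → f (A ∪ B) = 0)
    (hcomp : ∀ C : (SimpleGraph.fromEdgeSet F).ConnectedComponent, f C.supp = 0)
    (F' : Set (Sym2 V))
    (hF' : F' = {e ∈ F |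
      ∃ N : (SimpleGraph.fromEdgeSet (F \ {e})).ConnectedComponent, f N.supp = 1}) :
    ∀ N : (SimpleGraph.fromEdgeSet F').ConnectedComponent, f N.supp = 0 := by
  have hempty : f ∅ = 0 := by rwa [hsymm, Set.compl_empty]
  have hunpruned : ∀ e ∈ F \ F',
      ∀ C : (SimpleGraph.fromEdgeSet (F \ {e})).ConnectedComponent, f C.supp = 0 := by
    rintro e ⟨heF, heF'⟩ C
    refine (hrange C.supp).resolve_right fun h => heF' ?_
    rw [hF']
    exact ⟨heF, C, h⟩
  have hpruned : ∀ C : (SimpleGraph.fromEdgeSet (F \ (F \ F'))).ConnectedComponent,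
      f C.supp = 0 := by
    refine Set.Finite.induction_on_subset (F \ F') (Set.toFinite _)
      (motive := fun D _ => ∀ C : (SimpleGraph.fromEdgeSet (F \ D)).ConnectedComponent,
        f C.supp = 0) (by rwa [Set.sdiff_empty]) fun {e D} he _ _ ih => ?_
    have hHe := hunpruned e he
    rw [← deleteEdges_fromEdgeSet] at hHe
    rw [Set.insert_eq, Set.union_comm, ← Set.sdiff_sdiff, ← deleteEdges_fromEdgeSet]
    exact forall_supp_deleteEdges_eq_zero hempty hsymm hdisj
      (fromEdgeSet_mono Set.sdiff_subset) hforest ih hHe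
  rwa [Set.sdiff_sdiff_cancel_left (hF' ▸ Set.sep_subset F _)] at hpruned
end

section
/- Let V be a finite set, F' an edge set on V, and f a function from subsets of V to {0,1} that is disjunctive (if A,B⊆V are disjoint and f(A)=f(B)=0 then f(A∪B)=0). Suppose f(C)=0 for every connected component C of the graph (V,F'). Then for every nonempty S⊆V with f(S)=1 there exists an edge of F' with exactly one endpoint in S; equivalently, the indicator vector x of F' satisfies the constraints Σ_{e∈δ(S)} x_e ≥ f(S) for all nonempty proper subsets S of V. -/
/-- Theorem 1 of the paper: let `F'` be an edge set on a finite vertex set `V`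
and `f` a disjunctive function (values in `{0,1}`) such that `f C = 0` for
every connected component `C` of `(V, F')`.  Then for every nonempty `S ⊆ V`
with `f S = 1` there exists an edge of `F'` with exactly one endpoint in `S`,
i.e. the indicator vector of `F'` satisfies the constraints
`∑_{e ∈ δ(S)} x_e ≥ f S`. -/
theorem stmt_6 {V : Type*} [Fintype V] (F' : Set (Sym2 V)) (f : Set V → ℕ)
    (hrange : ∀ S : Set V, f S = 0 ∨ f S = 1)
    (hdisj : ∀ A B : Set V, Disjoint A B → f A = 0 → f B = 0 → f (A ∪ B) = 0)
    (hcomp : ∀ C : (SimpleGraph.fromEdgeSet F').ConnectedComponent, f C.supp = 0) :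
    ∀ S : Set V, S.Nonempty → f S = 1 →
      ∃ e ∈ F', ∃ u v : V, e = s(u, v) ∧ u ∈ S ∧ v ∉ S := by
  classical
  set G := SimpleGraph.fromEdgeSet F' with hG
  intro S hS hfS
  by_contra hcon
  push_neg at hcon
  -- S is closed under walks
  have hclosed : ∀ u v : V, G.Reachable u v → u ∈ S → v ∈ S := by
    intro u v hr hu
    obtain ⟨p⟩ := hr
    induction p with
    | nil => exact hu
    | @cons a b c h p ih =>
      apply ih
      by_contra hb
      have hadj : s(a, b) ∈ F' ∧ a ≠ b := (SimpleGraph.fromEdgeSet_adj _).mp h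
      exact hb (hcon s(a,b) hadj.1 a b rfl hu)
  -- the finset of components meeting S
  let T : Finset G.ConnectedComponent :=
    Finset.univ.filter (fun C => (C.supp ∩ S).Nonempty)
  have hT : S = ⋃ C ∈ T, C.supp := by
    ext v
    constructor
    · intro hv
      refine Set.mem_iUnion₂.mpr ⟨G.connectedComponentMk v, ?_, ?_⟩
      · exact Finset.mem_filter.mpr ⟨Finset.mem_univ _,
          ⟨v, (SimpleGraph.ConnectedComponent.mem_supp_iff _ _).mpr rfl, hv⟩⟩
      · exact (SimpleGraph.ConnectedComponent.mem_supp_iff _ _).mpr rfl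
    · intro hv
      obtain ⟨C, hC, hvC⟩ := Set.mem_iUnion₂.mp hv
      obtain ⟨w, hwC, hwS⟩ := (Finset.mem_filter.mp hC).2
      have : G.Reachable w v := by
        have h1 := (SimpleGraph.ConnectedComponent.mem_supp_iff _ _).mp hvC
        have h2 := (SimpleGraph.ConnectedComponent.mem_supp_iff _ _).mp hwC
        exact Iff.mp SimpleGraph.ConnectedComponent.eq (h2.trans h1.symm)
      exact hclosed w v this hwS
  have hTne : T.Nonempty := by
    obtain ⟨v, hv⟩ := hS
    exact ⟨_, Finset.mem_filter.mpr ⟨Finset.mem_univ _,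
      ⟨v, (SimpleGraph.ConnectedComponent.mem_supp_iff _ _).mpr rfl, hv⟩⟩⟩
  -- f of a nonempty union of component supports is 0
  have key : ∀ t : Finset G.ConnectedComponent, t.Nonempty → f (⋃ C ∈ t, C.supp) = 0 := by
    intro t ht
    induction ht using Finset.Nonempty.cons_induction with
    | singleton a => simpa using hcomp a
    | cons a t hat ht ih =>
      have : (⋃ C ∈ Finset.cons a t hat, C.supp) = a.supp ∪ ⋃ C ∈ t, C.supp := by
        simp [Finset.cons_eq_insert, Set.biUnion_insert]
      rw [this]
      refine hdisj _ _ ?_ (hcomp a) ih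
      refine Set.disjoint_iUnion₂_right.mpr fun C hC => ?_
      exact G.pairwise_disjoint_supp_connectedComponent (by rintro rfl; exact hat hC)
  have := key T hTne
  rw [← hT] at this
  omega
end

section
/- Let V be a finite set, let F' be an edge set on V forming a forest, and let f be a function from subsets of V to {0,1} satisfying f(V)=0, symmetry (f(S)=f(V\S) for all S⊆V), and disjunctivity (if A,B⊆V are disjoint and f(A)=f(B)=0 then f(A∪B)=0). Suppose F is a forest edge set on V with F'⊆F, every connected component C of (V,F) satisfies f(C)=0, and F' = {e∈F : some connected component N of (V, F\{e}) satisfies f(N)=1}. If N is a connected component of (V,F) with f(N)=0 and e∈F' splits N into parts N_1 and N_2 when removed, then f(N_1)=1 and f(N_2)=1. -/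
open SimpleGraph

private lemma graph_sdiff_eq {V : Type*} (F : Set (Sym2 V)) (e : Sym2 V) :
    fromEdgeSet (F \ {e}) = fromEdgeSet F \ fromEdgeSet {e} := by
  ext a b
  simp only [fromEdgeSet_adj, Set.mem_diff, Set.mem_singleton_iff, sdiff_adj]
  tauto

/-- Walk decomposition lemma: any walk in `fromEdgeSet F` either stays in the
graph with edge `s(u,v)` removed, or both endpoints are reachable (in the
smaller graph) to `u` or `v`. -/
private lemma walk_key {V : Type*} (F : Set (Sym2 V)) (u v : V) :
    ∀ {a b : V}, (fromEdgeSet F).Walk a b →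
      (fromEdgeSet (F \ {s(u,v)})).Reachable a b ∨
      ((fromEdgeSet (F \ {s(u,v)})).Reachable a u ∨
        (fromEdgeSet (F \ {s(u,v)})).Reachable a v) ∧
      ((fromEdgeSet (F \ {s(u,v)})).Reachable b u ∨
        (fromEdgeSet (F \ {s(u,v)})).Reachable b v) := by
  intro a b p
  induction p with
  | nil => exact Or.inl (Reachable.refl _)
  | @cons a c b h q ih =>
    rw [fromEdgeSet_adj] at h
    by_cases hac : s(a, c) = s(u, v)
    · -- a and c are among u, v
      have ha : a = u ∧ c = v ∨ a = v ∧ c = u := by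
        rwa [Sym2.eq_iff] at hac
      have hau : (fromEdgeSet (F \ {s(u,v)})).Reachable a u ∨
          (fromEdgeSet (F \ {s(u,v)})).Reachable a v := by
        rcases ha with ⟨rfl, rfl⟩ | ⟨rfl, rfl⟩
        · exact Or.inl (Reachable.refl _)
        · exact Or.inr (Reachable.refl _)
      have hcu : (fromEdgeSet (F \ {s(u,v)})).Reachable c u ∨
          (fromEdgeSet (F \ {s(u,v)})).Reachable c v := by
        rcases ha with ⟨rfl, rfl⟩ | ⟨rfl, rfl⟩
        · exact Or.inr (Reachable.refl _)
        · exact Or.inl (Reachable.refl _)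
      refine Or.inr ⟨hau, ?_⟩
      rcases ih with hcb | ⟨_, hb⟩
      · rcases hcu with h1 | h1
        · exact Or.inl (hcb.symm.trans h1)
        · exact Or.inr (hcb.symm.trans h1)
      · exact hb
    · have hadj : (fromEdgeSet (F \ {s(u,v)})).Adj a c := by
        rw [fromEdgeSet_adj]
        exact ⟨⟨h.1, hac⟩, h.2⟩
      rcases ih with hcb | ⟨hc, hb⟩
      · exact Or.inl (hadj.reachable.trans hcb)
      · refine Or.inr ⟨?_, hb⟩
        rcases hc with h1 | h1
        · exact Or.inl (hadj.reachable.trans h1)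
        · exact Or.inr (hadj.reachable.trans h1)

/-- Key step of the paper's small lemma: let `F` be a forest edge set on a finite
vertex set `V`, `f` a correct constraint function (values in `{0,1}`, `f V = 0`,
symmetry, disjunctivity) with `f C = 0` for every connected component `C` of
`(V, F)`, and let `F' = {e ∈ F | some component N of (V, F \ {e}) has f N = 1}`
be the pruned edge set.  If `e = s(u,v) ∈ F'`, then the two parts into which
the component of `(V,F)` containing `e` splits when `e` is removed (the
components of `(V, F \ {e})` containing `u` and `v`) both have `f`-value `1`. -/
theorem stmt_7 {V : Type*} [Fintype V] (F : Set (Sym2 V)) (f : Set V → ℕ)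
    (hforest : (SimpleGraph.fromEdgeSet F).IsAcyclic)
    (hrange : ∀ S : Set V, f S = 0 ∨ f S = 1)
    (hV : f Set.univ = 0)
    (hsymm : ∀ S : Set V, f S = f Sᶜ)
    (hdisj : ∀ A B : Set V, Disjoint A B → f A = 0 → f B = 0 → f (A ∪ B) = 0)
    (hcomp : ∀ C : (SimpleGraph.fromEdgeSet F).ConnectedComponent, f C.supp = 0)
    (F' : Set (Sym2 V))
    (hF' : F' = {e ∈ F |
      ∃ N : (SimpleGraph.fromEdgeSet (F \ {e})).ConnectedComponent, f N.supp = 1})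
    (u v : V) (he : s(u, v) ∈ F') :
    f ((SimpleGraph.fromEdgeSet (F \ {s(u, v)})).connectedComponentMk u).supp = 1 ∧
    f ((SimpleGraph.fromEdgeSet (F \ {s(u, v)})).connectedComponentMk v).supp = 1 := by
  subst hF'
  set G := fromEdgeSet F with hG
  set G' := fromEdgeSet (F \ {s(u,v)}) with hG'
  obtain ⟨heF, N, hN⟩ := he
  -- u ≠ v case analysis
  by_cases huv : u = v
  · -- then G' = G, so N is a component of G with f N = 1, contradiction
    exfalso
    subst huv
    have hGG : G' = G := by
      ext a b
      simp only [hG, hG', fromEdgeSet_adj, Set.mem_diff, Set.mem_singleton_iff]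
      constructor
      · rintro ⟨⟨h1, _⟩, h2⟩; exact ⟨h1, h2⟩
      · rintro ⟨h1, h2⟩
        refine ⟨⟨h1, fun hc => h2 ?_⟩, h2⟩
        rw [Sym2.eq_iff] at hc
        rcases hc with ⟨rfl, rfl⟩ | ⟨rfl, rfl⟩ <;> rfl
    have hreach : ∀ a b, G'.Reachable a b ↔ G.Reachable a b := by
      rw [hGG]
      exact fun a b => Iff.rfl
    obtain ⟨w, hw⟩ := N.exists_rep
    rw [← hw] at hN
    have hN' : f (G'.connectedComponentMk w).supp = 1 := hN
    have hsupp : (G'.connectedComponentMk w).supp = (G.connectedComponentMk w).supp := by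
      ext x
      simp only [ConnectedComponent.mem_supp_iff, ConnectedComponent.eq, hreach]
    rw [hsupp] at hN'
    have := hcomp (G.connectedComponentMk w)
    omega
  -- e is an edge of G
  have hadj : G.Adj u v := by rw [hG, fromEdgeSet_adj]; exact ⟨heF, huv⟩
  -- u and v are not reachable in G'
  have hbridge : ¬ G'.Reachable u v := by
    have hb := (isAcyclic_iff_forall_edge_isBridge.mp hforest) (e := s(u,v))
      (by rwa [mem_edgeSet])
    rw [isBridge_iff] at hb
    rw [hG', graph_sdiff_eq]
    exact hb
  -- supports A and B
  set A := (G'.connectedComponentMk u).supp with hA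
  set B := (G'.connectedComponentMk v).supp with hB
  have hmemA : ∀ x, x ∈ A ↔ G'.Reachable x u := by
    intro x
    rw [hA, ConnectedComponent.mem_supp_iff, ConnectedComponent.eq]
  have hmemB : ∀ x, x ∈ B ↔ G'.Reachable x v := by
    intro x
    rw [hB, ConnectedComponent.mem_supp_iff, ConnectedComponent.eq]
  -- A and B are disjoint
  have hABdisj : Disjoint A B := by
    rw [Set.disjoint_left]
    intro x hxA hxB
    exact hbridge (((hmemA x).mp hxA).symm.trans ((hmemB x).mp hxB))
  -- the component of u in G equals A ∪ B
  have hCeq : (G.connectedComponentMk u).supp = A ∪ B := by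
    ext x
    rw [ConnectedComponent.mem_supp_iff, ConnectedComponent.eq, Set.mem_union,
      hmemA, hmemB]
    constructor
    · intro hr
      obtain ⟨p⟩ := hr
      rcases walk_key F u v p with h | ⟨hx, _⟩
      · exact Or.inl h
      · exact hx
    · rintro (h | h)
      · exact h.mono (fromEdgeSet_mono (Set.diff_subset)) |>.symm.symm
      · exact (h.mono (fromEdgeSet_mono (Set.diff_subset))).trans hadj.symm.reachable
  -- f(A ∪ B) = 0
  have hfAB : f (A ∪ B) = 0 := by rw [← hCeq]; exact hcomp _
  -- N is A or B
  obtain ⟨w, hw⟩ := N.exists_rep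
  rw [← hw] at hN
  have hNw : f (G'.connectedComponentMk w).supp = 1 := hN
  have hNcases : (G'.connectedComponentMk w).supp = A ∨
      (G'.connectedComponentMk w).supp = B := by
    by_cases hwu : G'.Reachable w u
    · left; rw [hA]; exact congrArg ConnectedComponent.supp (ConnectedComponent.eq.mpr hwu)
    by_cases hwv : G'.Reachable w v
    · right; rw [hB]; exact congrArg ConnectedComponent.supp (ConnectedComponent.eq.mpr hwv)
    · -- then the component of w in G' is a component of G, contradiction
      exfalso
      have hsupp : (G'.connectedComponentMk w).supp = (G.connectedComponentMk w).supp := by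
        ext x
        simp only [ConnectedComponent.mem_supp_iff, ConnectedComponent.eq]
        constructor
        · intro h; exact h.mono (fromEdgeSet_mono (Set.diff_subset))
        · intro hr
          obtain ⟨p⟩ := hr
          rcases walk_key F u v p with h | ⟨_, hw2⟩
          · exact h
          · rcases hw2 with h | h
            · exact absurd h hwu
            · exact absurd h hwv
      rw [hsupp] at hNw
      have := hcomp (G.connectedComponentMk w)
      omega
  -- main symmetry/disjointness argument: if f one part = 0 then f the other = 0
  have hkey : ∀ X Y : Set V, Disjoint X Y → X ∪ Y = A ∪ B → f Y = 0 → f X = 0 := by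
    intro X Y hXY hXYeq hY
    have hcompl : f (A ∪ B)ᶜ = 0 := by rw [← hsymm]; exact hfAB
    have hd : Disjoint Y (A ∪ B)ᶜ := by
      have hsub : Y ⊆ A ∪ B := hXYeq ▸ Set.subset_union_right
      exact disjoint_compl_right.mono_left hsub
    have h0 : f (Y ∪ (A ∪ B)ᶜ) = 0 := hdisj _ _ hd hY hcompl
    have hXc : (Y ∪ (A ∪ B)ᶜ)ᶜ = X := by
      rw [Set.compl_union, compl_compl]
      rw [← hXYeq]
      rw [Set.union_comm] at hXYeq ⊢
      ext x
      simp only [Set.mem_inter_iff, Set.mem_compl_iff, Set.mem_union]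
      constructor
      · rintro ⟨hnY, hx⟩
        rcases hx with hx | hx
        · exact absurd hx hnY
        · exact hx
      · intro hx
        exact ⟨fun hY' => (Set.disjoint_left.mp hXY hx hY'), Or.inr hx⟩
    have := hsymm (Y ∪ (A ∪ B)ᶜ)
    rw [hXc] at this
    omega
  -- conclude
  rcases hNcases with hNA | hNB
  · rw [hNA] at hNw
    refine ⟨hNw, ?_⟩
    rcases hrange B with hB0 | hB1
    · exfalso
      have : f A = 0 := hkey A B hABdisj rfl hB0
      omega
    · exact hB1
  · rw [hNB] at hNw
    refine ⟨?_, hNw⟩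
    rcases hrange A with hA0 | hA1
    · exfalso
      have : f B = 0 := hkey B A hABdisj.symm (Set.union_comm B A) hA0
      omega
    · exact hA1
end

section
/- Let H be a finite forest (a graph with no cycles) without isolated vertices, and let its vertex set be partitioned into an active part A and an inactive part I such that every vertex in I has degree at least 2. If A is nonempty, then the sum of the degrees of the vertices in A is at most 2(|A|−1), i.e., Σ_{v∈A} deg(v) ≤ (2 − 2/|A|)·|A|. -/
open SimpleGraph Finset Walk

private lemma concat_isPath' {V : Type*} {G : SimpleGraph V} {u v w : V}
    {p : G.Walk u v} (hp : p.IsPath) (h : G.Adj v w) (hw : w ∉ p.support) :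
    (p.concat h).IsPath := by
  rw [← SimpleGraph.Walk.isPath_reverse_iff, SimpleGraph.Walk.reverse_concat]
  exact hp.reverse.cons (by simpa [SimpleGraph.Walk.support_reverse] using hw)

/-- In an acyclic graph, adjacent vertices have different distances from any
vertex `r` that can reach them. -/
private lemma aux_dist_ne {V : Type*} [DecidableEq V] {G : SimpleGraph V} (hac : G.IsAcyclic)
    {r u w : V} (h : G.Adj u w) (hr : G.Reachable r u) :
    G.dist r u ≠ G.dist r w := by
  intro heq
  have hrw : G.Reachable r w := hr.trans h.reachable
  obtain ⟨p, hp, hpl⟩ := hr.exists_path_of_dist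
  obtain ⟨q, hq, hql⟩ := hrw.exists_path_of_dist
  have hwp : w ∉ p.support := by
    intro hw
    have h1 : G.dist r w ≤ (p.takeUntil w hw).length := SimpleGraph.dist_le _
    have h2 : (p.takeUntil w hw).length + (p.dropUntil w hw).length = p.length := by
      rw [← SimpleGraph.Walk.length_append, SimpleGraph.Walk.take_spec]
    have h4 : (p.dropUntil w hw).length ≠ 0 := fun h0 =>
      h.ne' (SimpleGraph.Walk.eq_of_length_eq_zero h0)
    omega
  have hcp : (p.concat h).IsPath := concat_isPath' hp h hwp
  have := hac.path_unique ⟨p.concat h, hcp⟩ ⟨q, hq⟩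
  have hlen : (p.concat h).length = q.length := by
    rw [show (p.concat h) = q from congrArg Subtype.val this]
  rw [SimpleGraph.Walk.length_concat] at hlen
  omega

/-- In an acyclic graph, a vertex has at most one neighbour that is closer to
`r`. -/
private lemma aux_parent_unique {V : Type*} [DecidableEq V] {G : SimpleGraph V} (hac : G.IsAcyclic)
    {r z u₁ u₂ : V} (h₁ : G.Adj u₁ z) (h₂ : G.Adj u₂ z)
    (hr₁ : G.Reachable r u₁) (hr₂ : G.Reachable r u₂)
    (hd₁ : G.dist r u₁ < G.dist r z) (hd₂ : G.dist r u₂ < G.dist r z) :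
    u₁ = u₂ := by
  obtain ⟨p₁, hp₁, hpl₁⟩ := hr₁.exists_path_of_dist
  obtain ⟨p₂, hp₂, hpl₂⟩ := hr₂.exists_path_of_dist
  have ht₁ : G.dist r z ≤ G.dist r u₁ + 1 := by
    have := SimpleGraph.dist_le (p₁.concat h₁)
    rwa [SimpleGraph.Walk.length_concat, hpl₁] at this
  have ht₂ : G.dist r z ≤ G.dist r u₂ + 1 := by
    have := SimpleGraph.dist_le (p₂.concat h₂)
    rwa [SimpleGraph.Walk.length_concat, hpl₂] at this
  have hz₁ : z ∉ p₁.support := by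
    intro hz
    have := SimpleGraph.dist_le (p₁.takeUntil z hz)
    have := SimpleGraph.Walk.length_takeUntil_le p₁ hz
    omega
  have hz₂ : z ∉ p₂.support := by
    intro hz
    have := SimpleGraph.dist_le (p₂.takeUntil z hz)
    have := SimpleGraph.Walk.length_takeUntil_le p₂ hz
    omega
  have hq₁ : (p₁.concat h₁).IsPath := concat_isPath' hp₁ h₁ hz₁
  have hq₂ : (p₂.concat h₂).IsPath := concat_isPath' hp₂ h₂ hz₂
  have heq : (p₁.concat h₁) = (p₂.concat h₂) :=
    congrArg Subtype.val (hac.path_unique ⟨_, hq₁⟩ ⟨_, hq₂⟩)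
  have hsup := congrArg (fun w => w.reverse.support) heq
  simp only [SimpleGraph.Walk.reverse_concat, SimpleGraph.Walk.support_cons] at hsup
  rw [p₁.reverse.support_eq_cons, p₂.reverse.support_eq_cons] at hsup
  simp only [List.cons.injEq] at hsup
  exact hsup.2.1

/-- A finite acyclic graph on a nonempty vertex set has at most `n - 1`
edges. -/
private lemma aux_card_edges {V : Type*} [Fintype V] [DecidableEq V]
    (G : SimpleGraph V) [DecidableRel G.Adj] (hac : G.IsAcyclic)
    (hne : Nonempty V) : G.edgeFinset.card + 1 ≤ Fintype.card V := by
  classical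
  set root : V → V := fun u => (G.connectedComponentMk u).out with hrootdef
  have hreach : ∀ u, G.Reachable (root u) u := by
    intro u
    apply SimpleGraph.ConnectedComponent.exact
    exact Quot.out_eq _
  have hroot_eq : ∀ {u w : V}, G.Adj u w → root u = root w := by
    intro u w h
    simp only [hrootdef]
    rw [SimpleGraph.ConnectedComponent.connectedComponentMk_eq_of_adj h]
  obtain ⟨v₀⟩ := hne
  set r₀ := root v₀ with hr₀
  have hr0 : root r₀ = r₀ := by
    simp only [hr₀, hrootdef]
    exact congrArg Quot.out (Quot.out_eq _)
  -- the farther endpoint of an edge, measured from the root of its component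
  set f : Sym2 V → V := fun e =>
    if G.dist (root e.out.1) e.out.1 < G.dist (root e.out.1) e.out.2
      then e.out.2 else e.out.1 with hfdef
  have hout : ∀ e : Sym2 V, s(e.out.1, e.out.2) = e := fun e => Quot.out_eq e
  have hP : ∀ e ∈ G.edgeFinset, ∃ c : V, G.Adj c (f e) ∧ e = s(c, f e) ∧
      G.dist (root (f e)) c < G.dist (root (f e)) (f e) := by
    intro e he
    rw [SimpleGraph.mem_edgeFinset, ← hout e, SimpleGraph.mem_edgeSet] at he
    have hne' := aux_dist_ne hac he (hreach e.out.1)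
    have hrr : root e.out.1 = root e.out.2 := hroot_eq he
    by_cases hlt : G.dist (root e.out.1) e.out.1 < G.dist (root e.out.1) e.out.2
    · have hfe : f e = e.out.2 := by simp only [hfdef, if_pos hlt]
      refine ⟨e.out.1, hfe ▸ he, ?_, ?_⟩
      · rw [hfe, hout]
      · rw [hfe, ← hrr]
        exact hlt
    · have hfe : f e = e.out.1 := by simp only [hfdef, if_neg hlt]
      refine ⟨e.out.2, hfe ▸ he.symm, ?_, ?_⟩
      · rw [hfe, Sym2.eq_swap, hout]
      · rw [hfe]
        omega
  have hmaps : ∀ e ∈ G.edgeFinset, f e ∈ Finset.univ.erase r₀ := by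
    intro e he
    obtain ⟨c, hadj, -, hdist⟩ := hP e he
    refine Finset.mem_erase.mpr ⟨?_, Finset.mem_univ _⟩
    intro hfr
    have h1 : root (f e) = f e := by rw [hfr, hr0]
    rw [h1] at hdist
    simp [SimpleGraph.dist_self] at hdist
  have hinj : Set.InjOn f G.edgeFinset := by
    intro e₁ he₁ e₂ he₂ hfe
    obtain ⟨c₁, hadj₁, heq₁, hd₁⟩ := hP e₁ he₁
    obtain ⟨c₂, hadj₂, heq₂, hd₂⟩ := hP e₂ he₂
    rw [hfe] at hadj₁ heq₁ hd₁
    have hrc₁ : root c₁ = root (f e₂) := hroot_eq hadj₁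
    have hrc₂ : root c₂ = root (f e₂) := hroot_eq hadj₂
    have hcc : c₁ = c₂ := by
      apply aux_parent_unique hac hadj₁ hadj₂ (hrc₁ ▸ hreach c₁) (hrc₂ ▸ hreach c₂) hd₁ hd₂
    rw [heq₁, hcc]
    exact heq₂.symm
  have hcard : G.edgeFinset.card ≤ (Finset.univ.erase r₀).card :=
    Finset.card_le_card_of_injOn f hmaps hinj
  rw [Finset.card_erase_of_mem (Finset.mem_univ _), Finset.card_univ] at hcard
  have : 0 < Fintype.card V := Fintype.card_pos_iff.mpr ⟨v₀⟩
  omega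

/-- Let `H` be a finite forest without isolated vertices whose vertex set is
partitioned into an active part `A` and an inactive part (the complement of
`A`) in which every vertex has degree at least `2`.  If `A` is nonempty then
`∑_{v ∈ A} deg v ≤ 2(|A| - 1)`, i.e. `∑_{v ∈ A} deg v ≤ (2 - 2/|A|)·|A|`. -/
theorem stmt_8 {V : Type*} [Fintype V] [DecidableEq V]
    (H : SimpleGraph V) [DecidableRel H.Adj]
    (hacyclic : H.IsAcyclic)
    (hnoiso : ∀ v : V, 0 < H.degree v)
    (A : Finset V)
    (hI : ∀ v : V, v ∉ A → 2 ≤ H.degree v)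
    (hA : A.Nonempty) :
    ∑ v ∈ A, H.degree v ≤ 2 * (A.card - 1) := by
  obtain ⟨a₀, ha₀⟩ := hA
  have hne : Nonempty V := ⟨a₀⟩
  have hE : H.edgeFinset.card + 1 ≤ Fintype.card V := aux_card_edges H hacyclic hne
  have hsum : ∑ v ∈ A, H.degree v + ∑ v ∈ Aᶜ, H.degree v = 2 * H.edgeFinset.card := by
    rw [Finset.sum_add_sum_compl, SimpleGraph.sum_degrees_eq_twice_card_edges]
  have hcompl : 2 * Aᶜ.card ≤ ∑ v ∈ Aᶜ, H.degree v := by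
    calc 2 * Aᶜ.card = ∑ _v ∈ Aᶜ, 2 := by rw [Finset.sum_const, smul_eq_mul, mul_comm]
    _ ≤ ∑ v ∈ Aᶜ, H.degree v := Finset.sum_le_sum fun v hv =>
        hI v (Finset.mem_compl.mp hv)
  have hc : Aᶜ.card = Fintype.card V - A.card := Finset.card_compl A
  have hAle : A.card ≤ Fintype.card V := Finset.card_le_card (Finset.subset_univ A)
  have hA1 : 1 ≤ A.card := Finset.card_pos.mpr ⟨a₀, ha₀⟩
  omega
end
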